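/- Let μ and ν be finite positive Borel measures on ℝ^d satisfying Assumption 1. For every fixed n ∈ ℕ, the feasible set of the level-n semidefinite relaxation is nonempty and compact, and the infimum ρ_n is attained: there exists a feasible pair (φ^{(n)}, ψ^{(n)}) of degree-2n pseudo-moment vectors with φ^{(n)}(1) + ψ^{(n)}(1) = ρ_n. -/

import Mathlib

open MeasureTheory Finset Filter

noncomputable section

/-- The monomial `x ↦ x^α`. -/
def mono (d : ℕ) (α : Fin d → ℕ) (x : Fin d → ℝ) : ℝ := ∏ i, x i ^ α i

/-- All moments of `μ` are finite. -/
def HasAllMoments {d : ℕ} (μ : Measure (Fin d → ℝ)) : Prop :=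
  ∀ α : Fin d → ℕ, Integrable (mono d α) μ

/-- The moment `μ_α = ∫ x^α dμ`. -/
def mMom {d : ℕ} (μ : Measure (Fin d → ℝ)) (α : Fin d → ℕ) : ℝ := ∫ x, mono d α x ∂μ

instance fintypeIdx (d n : ℕ) : Fintype {α : Fin d → ℕ // ∑ i, α i ≤ n} :=
  Fintype.ofInjective
    (fun a => (fun i => (⟨a.1 i,
        Nat.lt_succ_of_le (le_trans
          (Finset.single_le_sum (fun j _ => Nat.zero_le (a.1 j)) (Finset.mem_univ i)) a.2)⟩ :
        Fin (n+1))) : _ → (Fin d → Fin (n+1)))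
    (fun a b h => by
      apply Subtype.ext
      funext i
      exact congrArg Fin.val (congrFun h i))

/-- Moment matrix of order `n` built from a moment function `m`. -/
def momMat (d n : ℕ) (m : (Fin d → ℕ) → ℝ) :
    Matrix {α : Fin d → ℕ // ∑ i, α i ≤ n} {α : Fin d → ℕ // ∑ i, α i ≤ n} ℝ :=
  fun a b => m (a.1 + b.1)

/-- Carleman's condition. -/
def Carleman {d : ℕ} (μ : Measure (Fin d → ℝ)) : Prop :=
  ∀ i : Fin d, ¬ Summable (fun j : ℕ =>
    (∫ x, x i ^ (2 * (j + 1)) ∂μ) ^ (-(1 : ℝ) / (2 * (j + 1) : ℝ)))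

/-- Positive part of the Hahn–Jordan decomposition of `μ - ν`. -/
def hjPos {d : ℕ} (μ ν : Measure (Fin d → ℝ)) [IsFiniteMeasure μ] [IsFiniteMeasure ν] :
    Measure (Fin d → ℝ) :=
  (μ.toSignedMeasure - ν.toSignedMeasure).toJordanDecomposition.posPart

/-- Negative part of the Hahn–Jordan decomposition of `μ - ν`. -/
def hjNeg {d : ℕ} (μ ν : Measure (Fin d → ℝ)) [IsFiniteMeasure μ] [IsFiniteMeasure ν] :
    Measure (Fin d → ℝ) :=
  (μ.toSignedMeasure - ν.toSignedMeasure).toJordanDecomposition.negPart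

/-- Total variation distance `‖μ - ν‖_TV` (as a real number). -/
def tvReal {d : ℕ} (μ ν : Measure (Fin d → ℝ)) [IsFiniteMeasure μ] [IsFiniteMeasure ν] : ℝ :=
  (hjPos μ ν Set.univ + hjNeg μ ν Set.univ).toReal

/-- Degree-`2n` pseudo-moment vectors. -/
abbrev PV (d n : ℕ) := {α : Fin d → ℕ // ∑ i, α i ≤ 2 * n} → ℝ

/-- Moment matrix of a degree-`2n` pseudo-moment vector. -/
def pvMat (d n : ℕ) (φ : PV d n) :
    Matrix {α : Fin d → ℕ // ∑ i, α i ≤ n} {α : Fin d → ℕ // ∑ i, α i ≤ n} ℝ :=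
  fun a b => φ ⟨a.1 + b.1, by
    have h : ∑ i, (a.1 + b.1) i = (∑ i, a.1 i) + ∑ i, b.1 i := by
      simp [Finset.sum_add_distrib]
    have ha := a.2
    have hb := b.2
    omega⟩

/-- The index `α = 0`. -/
def zeroIdx (d n : ℕ) : {α : Fin d → ℕ // ∑ i, α i ≤ 2 * n} := ⟨0, by simp⟩

/-- Feasibility for the level-`n` semidefinite relaxation. -/
def Feas (d n : ℕ) (μ ν : Measure (Fin d → ℝ)) (φ ψ : PV d n) : Prop :=
  (∀ α, φ α - ψ α = mMom μ α.1 - mMom ν α.1) ∧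
  (pvMat d n φ).PosSemidef ∧ (momMat d n (mMom μ) - pvMat d n φ).PosSemidef ∧
  (pvMat d n ψ).PosSemidef ∧ (momMat d n (mMom ν) - pvMat d n ψ).PosSemidef

/-- Values of the level-`n` semidefinite relaxation. -/
def primalSet (d n : ℕ) (μ ν : Measure (Fin d → ℝ)) : Set ℝ :=
  {r | ∃ φ ψ : PV d n, Feas d n μ ν φ ψ ∧ r = φ (zeroIdx d n) + ψ (zeroIdx d n)}

/-- The optimal value `ρ_n` of the level-`n` semidefinite relaxation. -/
def rho (d n : ℕ) (μ ν : Measure (Fin d → ℝ)) : ℝ := sInf (primalSet d n μ ν)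


/-- Assumption 1: all moments of `μ` and `ν` are finite, and there is `c > 0` with
`∫ exp(c|x_i|) dμ < ∞` and `∫ exp(c|x_i|) dν < ∞` for every coordinate `i`. -/
def Assumption1 {d : ℕ} (μ ν : Measure (Fin d → ℝ)) : Prop :=
  HasAllMoments μ ∧ HasAllMoments ν ∧
  ∃ c : ℝ, 0 < c ∧ (∀ i : Fin d, Integrable (fun x => Real.exp (c * |x i|)) μ) ∧
    (∀ i : Fin d, Integrable (fun x => Real.exp (c * |x i|)) ν)

/-! The true moments are feasible, since a moment matrix `M_n(μ)` is the Gram matrix of the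
monomials in `L²(μ)`. Every index `γ` with `|γ| ≤ 2n` splits as `a + b` with `|a|, |b| ≤ n`, so
`φ_γ` is an entry of `M_n(φ)`; for `0 ⪯ M_n(φ) ⪯ M_n(μ)` it is bounded by the diagonal of
`M_n(φ)`, hence by `tr M_n(μ)`. The constraints are closed, so the feasible set is compact and the
continuous objective `φ(1) + ψ(1)` attains its infimum on it. -/

namespace Matrix

theorem isClosed_setOf_posSemidef {n R : Type*} [Ring R] [PartialOrder R] [StarRing R]
    [TopologicalSpace R] [IsTopologicalRing R] [ContinuousStar R] [OrderClosedTopology R] :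
    IsClosed {M : Matrix n n R | M.PosSemidef} := by
  simp only [PosSemidef, IsHermitian, Set.ofPred_and, Set.ofPred_forall]
  refine (isClosed_eq continuous_id.matrix_conjTranspose continuous_id).inter
    (isClosed_iInter fun x ↦ isClosed_le continuous_const ?_)
  exact continuous_finsetSum _ fun i _ ↦ continuous_finsetSum _ fun j _ ↦
    (continuous_const.mul (continuous_apply_apply i j)).mul continuous_const

theorem PosSemidef.two_mul_abs_apply_le {n : Type*} {A : Matrix n n ℝ} (hA : A.PosSemidef)
    (i j : n) : 2 * |A i j| ≤ A i i + A j j := by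
  have hB := hA.submatrix ![i, j]
  have hplus := hB.dotProduct_mulVec_nonneg ![1, 1]
  have hminus := hB.dotProduct_mulVec_nonneg ![1, -1]
  have hsymm : A j i = A i j := hA.isHermitian.apply i j
  simp only [dotProduct, mulVec, submatrix_apply, Fin.sum_univ_two, Pi.star_apply, star_trivial,
    cons_val_zero, cons_val_one, cons_val_fin_one, hsymm] at hplus hminus
  rcases abs_cases (A i j) with ⟨h, -⟩ | ⟨h, -⟩ <;> linarith

theorem PosSemidef.abs_apply_le_trace {n : Type*} [Fintype n] {A B : Matrix n n ℝ}
    (hA : A.PosSemidef) (hBA : (B - A).PosSemidef) (i j : n) : |A i j| ≤ B.trace := by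
  have hB : B.PosSemidef := by simpa using hBA.add hA
  have hdiag (k : n) : A k k ≤ B k k := by simpa using hBA.diag_nonneg (i := k)
  have htrace (k : n) : B k k ≤ B.trace :=
    single_le_sum (f := fun l ↦ B l l) (fun l _ ↦ hB.diag_nonneg) (mem_univ k)
  linarith [hA.two_mul_abs_apply_le i j, hdiag i, hdiag j, htrace i, htrace j]

end Matrix

theorem exists_le_sum_eq {ι : Type*} [Fintype ι] [DecidableEq ι] (γ : ι → ℕ) {m : ℕ}
    (hm : m ≤ ∑ i, γ i) : ∃ a ≤ γ, ∑ i, a i = m := by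
  induction m with
  | zero => exact ⟨0, fun _ ↦ Nat.zero_le _, by simp⟩
  | succ m ih =>
    obtain ⟨a, haγ, rfl⟩ := ih (by omega)
    obtain ⟨i, hi⟩ : ∃ i, a i < γ i := by
      by_contra! h
      have := sum_le_sum fun i (_ : i ∈ univ) ↦ h i
      omega
    refine ⟨a + Pi.single i 1, fun j ↦ ?_, by simp [sum_add_distrib]⟩
    rcases eq_or_ne j i with rfl | hj
    · simpa using hi
    · simpa [hj] using haγ j

theorem exists_add_eq_of_sum_le_add {ι : Type*} [Fintype ι] (γ : ι → ℕ) {m k : ℕ}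
    (h : ∑ i, γ i ≤ m + k) : ∃ a b : ι → ℕ, a + b = γ ∧ ∑ i, a i ≤ m ∧ ∑ i, b i ≤ k := by
  classical
  obtain ⟨a, haγ, ha⟩ := exists_le_sum_eq γ (min_le_right m (∑ i, γ i))
  refine ⟨a, γ - a, add_tsub_cancel_of_le haγ, ha ▸ min_le_left _ _, ?_⟩
  rw [Pi.sub_def, sum_tsub_distrib _ fun i _ ↦ haγ i, ha]
  omega

theorem mono_add {d : ℕ} (α β : Fin d → ℕ) (x : Fin d → ℝ) :
    mono d (α + β) x = mono d α x * mono d β x := by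
  simp only [mono, Pi.add_apply, pow_add, prod_mul_distrib]

theorem continuous_mono (d : ℕ) (α : Fin d → ℕ) : Continuous (mono d α) := by
  unfold mono; fun_prop

theorem HasAllMoments.memLp_two_mono {d : ℕ} {μ : Measure (Fin d → ℝ)} (hμ : HasAllMoments μ)
    (α : Fin d → ℕ) : MemLp (mono d α) 2 μ :=
  (memLp_two_iff_integrable_sq (continuous_mono d α).aestronglyMeasurable).2 <| by
    simpa only [sq, ← mono_add] using hμ (α + α)

theorem momMat_eq_gram {d : ℕ} (n : ℕ) {μ : Measure (Fin d → ℝ)} (hμ : HasAllMoments μ) :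
    momMat d n (mMom μ) = Matrix.gram ℝ fun a ↦ (hμ.memLp_two_mono a.1).toLp := by
  ext a b
  rw [Matrix.gram_apply, L2.inner_def, momMat, mMom]
  refine integral_congr_ae ?_
  filter_upwards [(hμ.memLp_two_mono a.1).coeFn_toLp, (hμ.memLp_two_mono b.1).coeFn_toLp]
    with x ha hb
  simp [ha, hb, mono_add, mul_comm]

theorem HasAllMoments.posSemidef_momMat {d : ℕ} (n : ℕ) {μ : Measure (Fin d → ℝ)}
    (hμ : HasAllMoments μ) : (momMat d n (mMom μ)).PosSemidef :=
  momMat_eq_gram n hμ ▸ Matrix.posSemidef_gram ℝ _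

section Relaxation

variable (d n : ℕ) (μ ν : Measure (Fin d → ℝ))

theorem continuous_pvMat : Continuous (pvMat d n) :=
  continuous_pi fun _ ↦ continuous_pi fun _ ↦ continuous_apply _

theorem exists_pvMat_apply_eq (γ : {α : Fin d → ℕ // ∑ i, α i ≤ 2 * n}) :
    ∃ a b, ∀ φ : PV d n, pvMat d n φ a b = φ γ := by
  obtain ⟨a, b, hab, ha, hb⟩ :=
    exists_add_eq_of_sum_le_add γ.1 (m := n) (k := n) (by have := γ.2; omega)
  exact ⟨⟨a, ha⟩, ⟨b, hb⟩, fun φ ↦ congrArg φ (Subtype.ext hab)⟩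

variable {d n} in
theorem abs_le_trace_of_posSemidef_pvMat {φ : PV d n} {B : Matrix _ _ ℝ}
    (hφ : (pvMat d n φ).PosSemidef) (hBφ : (B - pvMat d n φ).PosSemidef)
    (γ : {α : Fin d → ℕ // ∑ i, α i ≤ 2 * n}) : |φ γ| ≤ B.trace := by
  obtain ⟨a, b, hab⟩ := exists_pvMat_apply_eq d n γ
  exact hab φ ▸ hφ.abs_apply_le_trace hBφ a b

def feasSet : Set (PV d n × PV d n) := {p | Feas d n μ ν p.1 p.2}

theorem pvMat_moments : pvMat d n (fun γ ↦ mMom μ γ.1) = momMat d n (mMom μ) := rfl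

variable {μ ν} in
theorem feas_moments (hμ : HasAllMoments μ) (hν : HasAllMoments ν) :
    Feas d n μ ν (fun γ ↦ mMom μ γ.1) (fun γ ↦ mMom ν γ.1) := by
  refine ⟨fun _ ↦ rfl, ?_, ?_, ?_, ?_⟩ <;>
    simp only [pvMat_moments, sub_self, Matrix.PosSemidef.zero, hμ.posSemidef_momMat,
      hν.posSemidef_momMat]

theorem isClosed_feasSet : IsClosed (feasSet d n μ ν) := by
  have hpsd := Matrix.isClosed_setOf_posSemidef (n := {α : Fin d → ℕ // ∑ i, α i ≤ n}) (R := ℝ)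
  have hφ : Continuous fun p : PV d n × PV d n ↦ pvMat d n p.1 :=
    (continuous_pvMat d n).comp continuous_fst
  have hψ : Continuous fun p : PV d n × PV d n ↦ pvMat d n p.2 :=
    (continuous_pvMat d n).comp continuous_snd
  simp only [feasSet, Feas, Set.ofPred_and, Set.ofPred_forall]
  exact (isClosed_iInter fun _ ↦ isClosed_eq (by fun_prop) continuous_const).inter <|
    (hpsd.preimage hφ).inter <| (hpsd.preimage (continuous_const.sub hφ)).inter <|
    (hpsd.preimage hψ).inter (hpsd.preimage (continuous_const.sub hψ))

theorem isCompact_feasSet : IsCompact (feasSet d n μ ν) := by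
  set Cμ := (momMat d n (mMom μ)).trace
  set Cν := (momMat d n (mMom ν)).trace
  refine .of_isClosed_subset ((isCompact_univ_pi fun _ ↦ isCompact_Icc (a := -Cμ) (b := Cμ)).prod
    (isCompact_univ_pi fun _ ↦ isCompact_Icc (a := -Cν) (b := Cν))) (isClosed_feasSet d n μ ν) ?_
  rintro ⟨φ, ψ⟩ ⟨-, hφ, hμφ, hψ, hνψ⟩
  exact ⟨fun γ _ ↦ abs_le.1 (abs_le_trace_of_posSemidef_pvMat hφ hμφ γ),
    fun γ _ ↦ abs_le.1 (abs_le_trace_of_posSemidef_pvMat hψ hνψ γ)⟩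

def objective (p : PV d n × PV d n) : ℝ := p.1 (zeroIdx d n) + p.2 (zeroIdx d n)

theorem continuous_objective : Continuous (objective d n) := by
  unfold objective; fun_prop

theorem primalSet_eq_image : primalSet d n μ ν = objective d n '' feasSet d n μ ν := by
  ext r
  simp [primalSet, feasSet, objective, eq_comm]

end Relaxation

theorem relaxation_feasible_compact_attained_general (d n : ℕ) (μ ν : Measure (Fin d → ℝ))
    (hA : Assumption1 μ ν) :
    {p : PV d n × PV d n | Feas d n μ ν p.1 p.2}.Nonempty ∧
    IsCompact {p : PV d n × PV d n | Feas d n μ ν p.1 p.2} ∧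
    ∃ φ ψ : PV d n, Feas d n μ ν φ ψ ∧
      φ (zeroIdx d n) + ψ (zeroIdx d n) = rho d n μ ν := by
  obtain ⟨hμ, hν, -⟩ := hA
  have hne : (feasSet d n μ ν).Nonempty := ⟨(_, _), feas_moments d n hμ hν⟩
  have hcpt := isCompact_feasSet d n μ ν
  refine ⟨hne, hcpt, ?_⟩
  obtain ⟨φ, ψ, hfeas, hρ⟩ : rho d n μ ν ∈ primalSet d n μ ν := by
    rw [rho, primalSet_eq_image]
    exact (hcpt.image (continuous_objective d n)).sInf_mem (hne.image _)
  exact ⟨φ, ψ, hfeas, hρ.symm⟩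

/-- Under Assumption 1, for each `n` the feasible set of the level-`n`
semidefinite relaxation is nonempty and compact, and the infimum `ρ_n` is attained. -/
theorem relaxation_feasible_compact_attained (d n : ℕ) (μ ν : Measure (Fin d → ℝ))
    [IsFiniteMeasure μ] [IsFiniteMeasure ν] (hA : Assumption1 μ ν) :
    {p : PV d n × PV d n | Feas d n μ ν p.1 p.2}.Nonempty ∧
    IsCompact {p : PV d n × PV d n | Feas d n μ ν p.1 p.2} ∧
    ∃ φ ψ : PV d n, Feas d n μ ν φ ψ ∧
      φ (zeroIdx d n) + ψ (zeroIdx d n) = rho d n μ ν :=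
  relaxation_feasible_compact_attained_general d n μ ν hA

end
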